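/- Let g be a non-constant boolean function on m variables and let f := OR_n ∘ g be the composition of the n-bit OR function with g (a boolean function on nm variables). Then C_1(f) = C_1(g), bs_1(f) = bs_1(g), bs*_1(f) = bs*_1(g), and C_0(f) = n · C_0(g), bs_0(f) = n · bs_0(g), bs*_0(f) = n · bs*_0(g). -/

import Mathlib

/-!
At a 0-input of `OR_n ∘ g` every row is a 0-input of `g`, and a set of positions is a block
exactly when its trace on some row is a block of `g` at that row. Certificates, families of
disjoint blocks and fractional block packings of the rows therefore glue together and split
apart, so each of the three measures is the sum of its values on the rows; the all-`y` input
realises `n` times the value of `g` at `y`. At a 1-input the trace of a block on any 1-row is a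
block of `g`, and if all other rows are fixed to a 0-input of `g`, every block of that row lifts
to a block of `OR_n ∘ g`; so the 1-measures agree.
-/

open Filter

namespace BS

variable {I : Type*} [Fintype I] [DecidableEq I]

/-- Flip the bits of `x` indexed by `B`. -/
def flipSet (x : I → Bool) (B : Finset I) : I → Bool :=
  fun i => if i ∈ B then !(x i) else x i

/-- `B` is a block of `f` at `x`. -/
def IsBlock (f : (I → Bool) → Bool) (x : I → Bool) (B : Finset I) : Prop :=
  f (flipSet x B) ≠ f x

/-- Block sensitivity of `f` at `x`: the maximum number of pairwise disjoint blocks. -/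
noncomputable def bsAt (f : (I → Bool) → Bool) (x : I → Bool) : ℕ :=
  sSup {k | ∃ B : Fin k → Finset I, (∀ t, IsBlock f x (B t)) ∧
    ∀ t t', t ≠ t' → Disjoint (B t) (B t')}

/-- Block sensitivity of `f`. -/
noncomputable def bs (f : (I → Bool) → Bool) : ℕ :=
  sSup {k | ∃ x, k = bsAt f x}

/-- `b`-block sensitivity of `f`. -/
noncomputable def bsb (f : (I → Bool) → Bool) (b : Bool) : ℕ :=
  sSup {k | ∃ x, f x = b ∧ k = bsAt f x}

/-- `M`-fold block sensitivity of `f` at `x`. -/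
noncomputable def bsMAt (f : (I → Bool) → Bool) (M : ℕ) (x : I → Bool) : ℕ :=
  sSup {k | ∃ B : Fin k → Finset I, (∀ t, IsBlock f x (B t)) ∧
    ∀ i : I, (Finset.univ.filter (fun t => i ∈ B t)).card ≤ M}

/-- `M`-fold `b`-block sensitivity of `f`. -/
noncomputable def bsMb (f : (I → Bool) → Bool) (M : ℕ) (b : Bool) : ℕ :=
  sSup {k | ∃ x, f x = b ∧ k = bsMAt f M x}

/-- Fractional block sensitivity of `f` at `x`. -/
noncomputable def fbsAt (f : (I → Bool) → Bool) (x : I → Bool) : ℝ :=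
  sSup {s | ∃ lam : Finset I → ℝ, (∀ B, 0 ≤ lam B) ∧
    (∀ B, ¬ IsBlock f x B → lam B = 0) ∧
    (∀ i : I, ∑ B ∈ Finset.univ.filter (fun B : Finset I => i ∈ B), lam B ≤ 1) ∧
    s = ∑ B : Finset I, lam B}

/-- Fractional block sensitivity of `f`. -/
noncomputable def fbs (f : (I → Bool) → Bool) : ℝ :=
  sSup {s | ∃ x, s = fbsAt f x}

/-- Fractional `b`-block sensitivity of `f`. -/
noncomputable def fbsb (f : (I → Bool) → Bool) (b : Bool) : ℝ :=
  sSup {s | ∃ x, f x = b ∧ s = fbsAt f x}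

/-- Certificate complexity of `f` at `x`. -/
noncomputable def CAt (f : (I → Bool) → Bool) (x : I → Bool) : ℕ :=
  sInf {k | ∃ S : Finset I, (∀ B, IsBlock f x B → (S ∩ B).Nonempty) ∧ k = S.card}

/-- Certificate complexity of `f`. -/
noncomputable def Cm (f : (I → Bool) → Bool) : ℕ :=
  sSup {k | ∃ x, k = CAt f x}

/-- `b`-certificate complexity of `f`. -/
noncomputable def Cb (f : (I → Bool) → Bool) (b : Bool) : ℕ :=
  sSup {k | ∃ x, f x = b ∧ k = CAt f x}

/-- Fractional certificate complexity of `f` at `x`. -/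
noncomputable def fCAt (f : (I → Bool) → Bool) (x : I → Bool) : ℝ :=
  sInf {s | ∃ w : I → ℝ, (∀ i, 0 ≤ w i ∧ w i ≤ 1) ∧
    (∀ B, IsBlock f x B → 1 ≤ ∑ i ∈ B, w i) ∧ s = ∑ i, w i}

/-- Fractional certificate complexity of `f`. -/
noncomputable def fC (f : (I → Bool) → Bool) : ℝ :=
  sSup {s | ∃ x, s = fCAt f x}

/-- Composition `f ∘ g` of boolean functions. -/
def comp {J : Type*} [Fintype J] [DecidableEq J]
    (f : (I → Bool) → Bool) (g : (J → Bool) → Bool) :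
    ((I × J) → Bool) → Bool :=
  fun x => f (fun i => g (fun j => x (i, j)))

/-- `k`-fold iterated composition `f^(k)` of an `n`-variate boolean function; the
variables of `f^(k)` are indexed by strings in `Fin k → Fin n`.  `f^(0)` is the
univariate identity function. -/
def iter {n : ℕ} (f : (Fin n → Bool) → Bool) :
    (k : ℕ) → ((Fin k → Fin n) → Bool) → Bool
  | 0, x => x (fun i => i.elim0)
  | k + 1, x => f (fun i => iter f k (fun s => x (Fin.cons i s)))

/-- Spectral radius of a real square matrix: the maximum of `|μ|` over the complex
eigenvalues `μ` of the matrix. -/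
noncomputable def specRad {m : Type*} [Fintype m] [DecidableEq m]
    (A : Matrix m m ℝ) : ℝ :=
  sSup {r | ∃ μ : ℂ, μ ∈ spectrum ℂ (A.map Complex.ofReal) ∧ r = ‖μ‖}

end BS

namespace BS

/-- The `n`-bit OR function. -/
def ORn (n : ℕ) : (Fin n → Bool) → Bool :=
  fun x => decide (∃ i, x i = true)

end BS


namespace BS

open Finset Function

section Blocks

variable {I : Type*} [DecidableEq I]

theorem flipSet_empty (x : I → Bool) : flipSet x ∅ = x := by
  funext i; simp [flipSet]

theorem IsBlock.nonempty {f : (I → Bool) → Bool} {x : I → Bool} {B : Finset I}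
    (h : IsBlock f x B) : B.Nonempty := by
  rw [nonempty_iff_ne_empty]
  rintro rfl
  exact h (by rw [flipSet_empty])

end Blocks

section FiniteSup

variable {X Y α : Type*}

theorem finite_setOf_exists_eq [Finite X] (p : X → Prop) (μ : X → α) :
    {a | ∃ x, p x ∧ a = μ x}.Finite :=
  (Set.finite_range μ).subset fun _ ⟨x, _, ha⟩ => ⟨x, ha.symm⟩

variable [ConditionallyCompleteLinearOrder α]

theorem le_sSup_setOf [Finite X] {p : X → Prop} {μ : X → α} {x : X} (hx : p x) :
    μ x ≤ sSup {a | ∃ x, p x ∧ a = μ x} :=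
  le_csSup (finite_setOf_exists_eq p μ).bddAbove ⟨x, hx, rfl⟩

theorem exists_sSup_setOf_eq [Finite X] {p : X → Prop} (μ : X → α) (h : ∃ x, p x) :
    ∃ x, p x ∧ sSup {a | ∃ x, p x ∧ a = μ x} = μ x := by
  obtain ⟨x, hx⟩ := h
  exact Set.Nonempty.csSup_mem (s := {a | ∃ x, p x ∧ a = μ x}) ⟨μ x, x, hx, rfl⟩
    (finite_setOf_exists_eq p μ)

theorem sSup_setOf_le_sSup_setOf [Finite Y] {p : X → Prop} {q : Y → Prop} {μ : X → α}
    {ν : Y → α} (hp : ∃ x, p x) (h : ∀ x, p x → ∃ y, q y ∧ μ x ≤ ν y) :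
    sSup {a | ∃ x, p x ∧ a = μ x} ≤ sSup {a | ∃ y, q y ∧ a = ν y} := by
  obtain ⟨x₀, hx₀⟩ := hp
  refine csSup_le ⟨μ x₀, x₀, hx₀, rfl⟩ ?_
  rintro _ ⟨x, hx, rfl⟩
  obtain ⟨y, hy, hle⟩ := h x hx
  exact hle.trans (le_sSup_setOf hy)

end FiniteSup

section CertificatesAndDisjointBlocks

variable {I : Type*} [DecidableEq I] {f : (I → Bool) → Bool} {x : I → Bool}

def IsCertificate (f : (I → Bool) → Bool) (x : I → Bool) (S : Finset I) : Prop :=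
  ∀ B, IsBlock f x B → (S ∩ B).Nonempty

theorem CAt_le_card {S : Finset I} (hS : IsCertificate f x S) : CAt f x ≤ #S :=
  Nat.sInf_le ⟨S, hS, rfl⟩

theorem exists_isCertificate_card_eq_CAt [Fintype I] (f : (I → Bool) → Bool) (x : I → Bool) :
    ∃ S, IsCertificate f x S ∧ #S = CAt f x := by
  have huniv : IsCertificate f x univ := fun B hB => by simpa using hB.nonempty
  have hmem : CAt f x ∈ {k | ∃ S, IsCertificate f x S ∧ k = #S} :=
    Nat.sInf_mem ⟨_, univ, huniv, rfl⟩
  obtain ⟨S, hS, hcard⟩ := hmem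
  exact ⟨S, hS, hcard.symm⟩

theorem bddAbove_setOf_disjoint_blocks [Fintype I] (f : (I → Bool) → Bool) (x : I → Bool) :
    BddAbove {k | ∃ B : Fin k → Finset I, (∀ t, IsBlock f x (B t)) ∧
      ∀ t t', t ≠ t' → Disjoint (B t) (B t')} := by
  refine ⟨Fintype.card I, ?_⟩
  rintro k ⟨B, hB, hd⟩
  choose e he using fun t => (hB t).nonempty
  simpa using Fintype.card_le_of_injective e fun t t' h => by_contra fun hne =>
    disjoint_left.mp (hd t t' hne) (he t) (h ▸ he t')

theorem exists_bsAt_family [Fintype I] (f : (I → Bool) → Bool) (x : I → Bool) :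
    ∃ B : Fin (bsAt f x) → Finset I, (∀ t, IsBlock f x (B t)) ∧
      ∀ t t', t ≠ t' → Disjoint (B t) (B t') := by
  refine Nat.sSup_mem ?_ (bddAbove_setOf_disjoint_blocks f x)
  exact ⟨0, Fin.elim0, fun t => t.elim0, fun t => t.elim0⟩

theorem card_le_bsAt [Fintype I] {κ : Type*} {T : Finset κ} {B : κ → Finset I}
    (hB : ∀ t ∈ T, IsBlock f x (B t)) (hd : (T : Set κ).PairwiseDisjoint B) :
    #T ≤ bsAt f x := by
  let e := T.equivFin.symm
  refine le_csSup (bddAbove_setOf_disjoint_blocks f x)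
    ⟨fun u => B (e u), fun u => hB _ (e u).2, fun u u' hne => ?_⟩
  exact hd (e u).2 (e u').2 fun h => hne (e.injective (Subtype.ext h))

end CertificatesAndDisjointBlocks

section FractionalBlockSensitivity

variable {I : Type*} [Fintype I] [DecidableEq I] {f : (I → Bool) → Bool} {x : I → Bool}
  {w : Finset I → ℝ}

structure IsFractionalBlockPacking (f : (I → Bool) → Bool) (x : I → Bool)
    (w : Finset I → ℝ) : Prop where
  nonneg : ∀ B, 0 ≤ w B
  eq_zero_of_not_isBlock : ∀ B, ¬ IsBlock f x B → w B = 0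
  sum_le_one : ∀ i, ∑ B ∈ univ.filter (i ∈ ·), w B ≤ 1

theorem IsFractionalBlockPacking.le_one (hw : IsFractionalBlockPacking f x w) (B : Finset I) :
    w B ≤ 1 := by
  by_cases hB : IsBlock f x B
  · obtain ⟨i, hi⟩ := hB.nonempty
    exact (single_le_sum (fun B _ => hw.nonneg B) (by simpa using hi)).trans (hw.sum_le_one i)
  · simp [hw.eq_zero_of_not_isBlock B hB]

theorem isFractionalBlockPacking_zero (f : (I → Bool) → Bool) (x : I → Bool) :
    IsFractionalBlockPacking f x 0 :=
  ⟨fun _ => le_rfl, fun _ _ => rfl, fun _ => by simp⟩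

theorem isCompact_setOf_isFractionalBlockPacking (f : (I → Bool) → Bool) (x : I → Bool) :
    IsCompact {w | IsFractionalBlockPacking f x w} := by
  have hclosed : IsClosed {w : Finset I → ℝ | IsFractionalBlockPacking f x w} := by
    have h : {w : Finset I → ℝ | IsFractionalBlockPacking f x w} =
        (⋂ B, {w | 0 ≤ w B}) ∩ (⋂ B, {w | ¬ IsBlock f x B → w B = 0}) ∩
          ⋂ i, {w | ∑ B ∈ univ.filter (i ∈ ·), w B ≤ 1} := by
      ext w
      simp only [Set.mem_inter_iff, Set.mem_iInter]
      exact ⟨fun h => ⟨⟨h.1, h.2⟩, h.3⟩, fun h => ⟨h.1.1, h.1.2, h.2⟩⟩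
    rw [h]
    refine .inter (.inter (isClosed_iInter fun B => ?_) (isClosed_iInter fun B => ?_))
      (isClosed_iInter fun i => ?_)
    · exact isClosed_le continuous_const (continuous_apply B)
    · by_cases hB : IsBlock f x B
      · simp [hB]
      · simpa [hB] using isClosed_eq (continuous_apply B) continuous_const
    · exact isClosed_le (continuous_finsetSum _ fun B _ => continuous_apply B) continuous_const
  refine (isCompact_univ_pi fun _ => isCompact_Icc (a := (0 : ℝ)) (b := 1)).of_isClosed_subset
    hclosed fun w hw B _ => ⟨hw.nonneg B, hw.le_one B⟩

theorem fbsAt_eq_sSup_image (f : (I → Bool) → Bool) (x : I → Bool) :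
    fbsAt f x = sSup ((fun w => ∑ B, w B) '' {w | IsFractionalBlockPacking f x w}) := by
  unfold fbsAt
  congr 1
  ext s
  constructor
  · rintro ⟨w, h₀, h₁, h₂, rfl⟩
    exact ⟨w, ⟨h₀, h₁, h₂⟩, rfl⟩
  · rintro ⟨w, hw, rfl⟩
    exact ⟨w, hw.1, hw.2, hw.3, rfl⟩

theorem isCompact_image_sum_isFractionalBlockPacking (f : (I → Bool) → Bool) (x : I → Bool) :
    IsCompact ((fun w => ∑ B, w B) '' {w | IsFractionalBlockPacking f x w}) :=
  (isCompact_setOf_isFractionalBlockPacking f x).image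
    (continuous_finsetSum _ fun B _ => continuous_apply B)

theorem IsFractionalBlockPacking.sum_le_fbsAt (hw : IsFractionalBlockPacking f x w) :
    ∑ B, w B ≤ fbsAt f x := by
  rw [fbsAt_eq_sSup_image]
  exact le_csSup (isCompact_image_sum_isFractionalBlockPacking f x).bddAbove ⟨w, hw, rfl⟩

theorem exists_isFractionalBlockPacking_sum_eq_fbsAt (f : (I → Bool) → Bool) (x : I → Bool) :
    ∃ w, IsFractionalBlockPacking f x w ∧ ∑ B, w B = fbsAt f x := by
  rw [fbsAt_eq_sSup_image]
  exact (isCompact_image_sum_isFractionalBlockPacking f x).sSup_mem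
    ⟨_, 0, isFractionalBlockPacking_zero f x, rfl⟩

end FractionalBlockSensitivity

section Pushforward

variable {α β : Type*} [Fintype α] [DecidableEq β]

def pushforward (φ : α → β) (w : α → ℝ) (b : β) : ℝ :=
  ∑ a ∈ univ.filter (φ · = b), w a

theorem sum_pushforward [Fintype β] (φ : α → β) (w : α → ℝ) :
    ∑ b, pushforward φ w b = ∑ a, w a :=
  sum_fiberwise univ φ w

theorem sum_filter_pushforward [Fintype β] (φ : α → β) (w : α → ℝ) (P : β → Prop)
    [DecidablePred P] :
    ∑ b ∈ univ.filter P, pushforward φ w b = ∑ a ∈ univ.filter (P ∘ φ), w a := by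
  rw [← sum_fiberwise_of_maps_to (g := φ) (t := univ.filter P) (by simp)]
  refine sum_congr rfl fun b hb => ?_
  rw [pushforward, filter_filter]
  refine sum_congr (filter_congr fun a _ => ?_) fun _ _ => rfl
  simp only [mem_filter, mem_univ, true_and] at hb
  constructor
  · rintro rfl; exact ⟨hb, rfl⟩
  · exact And.right

theorem pushforward_eq_zero {φ : α → β} {b : β} (h : ∀ a, φ a ≠ b) (w : α → ℝ) :
    pushforward φ w b = 0 :=
  sum_eq_zero fun a ha => absurd (mem_filter.1 ha).2 (h a)

end Pushforward

section FractionalPackings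

variable {I J : Type*} [Fintype I] [DecidableEq I] [Fintype J] [DecidableEq J]
  {f : (I → Bool) → Bool} {g : (J → Bool) → Bool} {x : I → Bool} {y : J → Bool}
  {w : Finset I → ℝ}

theorem IsFractionalBlockPacking.pushforward (hw : IsFractionalBlockPacking f x w)
    (φ : Finset I → Finset J) (ψ : J → I) (hφ : ∀ B, w B ≠ 0 → IsBlock g y (φ B))
    (hψ : ∀ B j, j ∈ φ B → ψ j ∈ B) :
    IsFractionalBlockPacking g y (pushforward φ w) where
  nonneg A := sum_nonneg fun B _ => hw.nonneg B
  eq_zero_of_not_isBlock A hA := sum_eq_zero fun B hB => by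
    by_contra hne
    exact hA ((mem_filter.1 hB).2 ▸ hφ B hne)
  sum_le_one j := by
    rw [sum_filter_pushforward]
    refine (sum_le_sum_of_subset_of_nonneg ?_ fun B _ _ => hw.nonneg B).trans
      (hw.sum_le_one (ψ j))
    intro B hB
    simp only [mem_filter, mem_univ, true_and, comp_apply] at hB ⊢
    exact hψ B j hB

theorem IsFractionalBlockPacking.restrict (hw : IsFractionalBlockPacking f x w)
    (p : Finset I → Prop) [DecidablePred p] :
    IsFractionalBlockPacking f x fun B => if p B then w B else 0 where
  nonneg B := by split_ifs <;> simp [hw.nonneg B]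
  eq_zero_of_not_isBlock B hB := by simp [hw.eq_zero_of_not_isBlock B hB]
  sum_le_one i := by
    refine (sum_le_sum fun B _ => ?_).trans (hw.sum_le_one i)
    split_ifs <;> simp [hw.nonneg B]

end FractionalPackings

section Rows

variable {ι J : Type*}

theorem pairwiseDisjoint_singleton_product (s : Finset ι) (A : ι → Finset J) :
    (s : Set ι).PairwiseDisjoint fun i => {i} ×ˢ A i :=
  fun _ _ _ _ hne => disjoint_product.2 (Or.inl (disjoint_singleton.2 hne))

variable [DecidableEq ι] [Fintype J] [DecidableEq J]

def row (i : ι) (B : Finset (ι × J)) : Finset J :=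
  univ.filter fun j => (i, j) ∈ B

@[simp] theorem mem_row {i : ι} {j : J} {B : Finset (ι × J)} : j ∈ row i B ↔ (i, j) ∈ B := by
  simp [row]

@[simp] theorem row_singleton_product (i : ι) (A : Finset J) : row i ({i} ×ˢ A) = A := by
  ext; simp

theorem row_singleton_product_of_ne {i i' : ι} (h : i' ≠ i) (A : Finset J) :
    row i' ({i} ×ˢ A) = ∅ := by
  ext; simp [h.symm]

theorem singleton_product_row_subset (i : ι) (B : Finset (ι × J)) : {i} ×ˢ row i B ⊆ B := by
  rintro ⟨i', j⟩ h
  obtain ⟨hj, rfl⟩ := by simpa using h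
  exact hj

theorem disjoint_row {B B' : Finset (ι × J)} (h : Disjoint B B') (i : ι) :
    Disjoint (row i B) (row i B') :=
  disjoint_left.2 fun _ hj hj' => disjoint_left.1 h (mem_row.1 hj) (mem_row.1 hj')

theorem curry_flipSet (x : ι × J → Bool) (B : Finset (ι × J)) (i : ι) :
    curry (flipSet x B) i = flipSet (curry x i) (row i B) := by
  funext j; simp [flipSet]

end Rows

section RowDecomposition

variable {ι J : Type*} [DecidableEq ι] [Fintype J] [DecidableEq J]
  {f : (ι × J → Bool) → Bool} {g : (J → Bool) → Bool} {x : ι × J → Bool} {s : Finset ι}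

def RowsDetectBlocks (f : (ι × J → Bool) → Bool) (g : (J → Bool) → Bool) (x : ι × J → Bool)
    (s : Finset ι) : Prop :=
  ∀ B, IsBlock f x B → ∃ i ∈ s, IsBlock g (curry x i) (row i B)

def RowBlocksLift (f : (ι × J → Bool) → Bool) (g : (J → Bool) → Bool) (x : ι × J → Bool)
    (s : Finset ι) : Prop :=
  ∀ i ∈ s, ∀ A, IsBlock g (curry x i) A → IsBlock f x ({i} ×ˢ A)

theorem CAt_le_sum_of_rowsDetectBlocks (h : RowsDetectBlocks f g x s) :
    CAt f x ≤ ∑ i ∈ s, CAt g (curry x i) := by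
  choose S hS hcard using fun i => exists_isCertificate_card_eq_CAt g (curry x i)
  have hcert : IsCertificate f x (s.biUnion fun i => {i} ×ˢ S i) := by
    intro B hB
    obtain ⟨i, hi, hrow⟩ := h B hB
    obtain ⟨j, hj⟩ := hS i _ hrow
    rw [mem_inter, mem_row] at hj
    exact ⟨(i, j), mem_inter.2 ⟨mem_biUnion.2 ⟨i, hi, by simp [hj.1]⟩, hj.2⟩⟩
  calc CAt f x ≤ #(s.biUnion fun i => {i} ×ˢ S i) := CAt_le_card hcert
    _ ≤ ∑ i ∈ s, #({i} ×ˢ S i) := card_biUnion_le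
    _ = ∑ i ∈ s, CAt g (curry x i) := by simp [hcard]

theorem sum_CAt_le_of_rowBlocksLift [Fintype ι] (h : RowBlocksLift f g x s) :
    ∑ i ∈ s, CAt g (curry x i) ≤ CAt f x := by
  obtain ⟨S, hS, hcard⟩ := exists_isCertificate_card_eq_CAt f x
  have hcert : ∀ i ∈ s, IsCertificate g (curry x i) (row i S) := by
    intro i hi A hA
    obtain ⟨⟨i', j⟩, hp⟩ := hS _ (h i hi A hA)
    obtain ⟨hpS, hpA⟩ := mem_inter.1 hp
    obtain ⟨hj, rfl⟩ := by simpa using hpA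
    exact ⟨j, mem_inter.2 ⟨mem_row.2 hpS, hj⟩⟩
  calc ∑ i ∈ s, CAt g (curry x i) ≤ ∑ i ∈ s, #({i} ×ˢ row i S) :=
        sum_le_sum fun i hi => by simpa using CAt_le_card (hcert i hi)
    _ = #(s.biUnion fun i => {i} ×ˢ row i S) :=
        (card_biUnion (pairwiseDisjoint_singleton_product s _)).symm
    _ ≤ #S := card_le_card (biUnion_subset.2 fun i _ => singleton_product_row_subset i S)
    _ = CAt f x := hcard

theorem bsAt_le_sum_of_rowsDetectBlocks [Fintype ι] (h : RowsDetectBlocks f g x s) :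
    bsAt f x ≤ ∑ i ∈ s, bsAt g (curry x i) := by
  obtain ⟨B, hB, hd⟩ := exists_bsAt_family f x
  choose r hr hrow using fun t => h (B t) (hB t)
  calc bsAt f x = ∑ i ∈ s, #(univ.filter fun t => r t = i) := by
        simpa using card_eq_sum_card_fiberwise (s := univ) fun t _ => hr t
    _ ≤ ∑ i ∈ s, bsAt g (curry x i) := by
        refine sum_le_sum fun i _ => card_le_bsAt (B := fun t => row i (B t)) ?_ ?_
        · intro t ht
          rw [← (mem_filter.1 ht).2]
          exact hrow t
        · exact fun t _ t' _ hne => disjoint_row (hd t t' hne) i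

theorem sum_bsAt_le_of_rowBlocksLift [Fintype ι] (h : RowBlocksLift f g x s) :
    ∑ i ∈ s, bsAt g (curry x i) ≤ bsAt f x := by
  choose A hA hd using fun i => exists_bsAt_family g (curry x i)
  have hle := card_le_bsAt (f := f) (x := x) (B := fun p => {p.1} ×ˢ A p.1 p.2)
    (T := s.sigma fun i => (univ : Finset (Fin (bsAt g (curry x i))))) ?_ ?_
  · simpa using hle
  · rintro ⟨i, t⟩ ht
    exact h i (mem_sigma.1 ht).1 _ (hA i t)
  · rintro ⟨i, t⟩ _ ⟨i', t'⟩ _ hne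
    by_cases hi : i = i'
    · subst hi
      exact disjoint_product.2 (Or.inr (hd i t t' fun ht => hne (by rw [ht])))
    · exact disjoint_product.2 (Or.inl (disjoint_singleton.2 hi))

theorem fbsAt_le_sum_of_rowsDetectBlocks [Fintype ι] (h : RowsDetectBlocks f g x s) :
    fbsAt f x ≤ ∑ i ∈ s, fbsAt g (curry x i) := by
  obtain ⟨w, hw, hsum⟩ := exists_isFractionalBlockPacking_sum_eq_fbsAt f x
  rw [← hsum]
  rcases s.eq_empty_or_nonempty with rfl | ⟨i₀, hi₀⟩
  · have hzero : ∀ B, w B = 0 := fun B =>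
      hw.eq_zero_of_not_isBlock B fun hB => by simpa using h B hB
    simp [hzero]
  -- charge each block of positive weight to one row that detects it
  have hr : ∀ B, ∃ i ∈ s, w B ≠ 0 → IsBlock g (curry x i) (row i B) := by
    intro B
    by_cases hB : IsBlock f x B
    · obtain ⟨i, hi, hrow⟩ := h B hB
      exact ⟨i, hi, fun _ => hrow⟩
    · exact ⟨i₀, hi₀, fun hne => absurd (hw.eq_zero_of_not_isBlock B hB) hne⟩
  choose r hrs hrow using hr
  have hpacking : ∀ i, IsFractionalBlockPacking g (curry x i)
      (pushforward (row i) fun B => if r B = i then w B else 0) := by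
    refine fun i => (hw.restrict (r · = i)).pushforward _ (Prod.mk i) (fun B hB => ?_)
      fun B j hj => mem_row.1 hj
    split_ifs at hB with hBi
    · exact hBi ▸ hrow B hB
    · exact absurd rfl hB
  calc ∑ B, w B = ∑ i ∈ s, ∑ B, if r B = i then w B else 0 := by
        rw [← sum_fiberwise_of_maps_to fun B _ => hrs B]
        simp only [sum_ite, sum_const_zero, add_zero]
    _ = ∑ i ∈ s, ∑ A, pushforward (row i) (fun B => if r B = i then w B else 0) A := by
        simp only [sum_pushforward]
    _ ≤ ∑ i ∈ s, fbsAt g (curry x i) := sum_le_sum fun i _ => (hpacking i).sum_le_fbsAt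

theorem isFractionalBlockPacking_sum_pushforward_singleton_product [Fintype ι]
    {w : ι → Finset J → ℝ} (hw : ∀ i ∈ s,
      IsFractionalBlockPacking f x (pushforward (fun A : Finset J => {i} ×ˢ A) (w i))) :
    IsFractionalBlockPacking f x
      fun C => ∑ i ∈ s, pushforward (fun A : Finset J => {i} ×ˢ A) (w i) C := by
  refine ⟨fun C => sum_nonneg fun i hi => (hw i hi).nonneg C,
    fun C hC => sum_eq_zero fun i hi => (hw i hi).eq_zero_of_not_isBlock C hC, fun p => ?_⟩
  have hzero : ∀ i ≠ p.1, ∀ C ∈ univ.filter (p ∈ ·),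
      pushforward (fun A : Finset J => {i} ×ˢ A) (w i) C = 0 :=
    fun i hi C hC => pushforward_eq_zero (fun A hA => by
      have hp := (mem_filter.1 hC).2
      rw [← hA, mem_product, mem_singleton] at hp
      exact hi hp.1.symm) _
  rw [sum_comm]
  calc _ = ∑ i ∈ s, if i = p.1 then
          ∑ C ∈ univ.filter (p ∈ ·), pushforward (fun A : Finset J => {i} ×ˢ A) (w i) C
        else 0 := by
        refine sum_congr rfl fun i _ => ?_
        split_ifs with hi
        · rfl
        · exact sum_eq_zero (hzero i hi)
    _ ≤ 1 := by
        rw [sum_ite_eq']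
        split_ifs with hp
        exacts [(hw _ hp).sum_le_one p, zero_le_one]

theorem sum_fbsAt_le_of_rowBlocksLift [Fintype ι] (h : RowBlocksLift f g x s) :
    ∑ i ∈ s, fbsAt g (curry x i) ≤ fbsAt f x := by
  choose w hw hsum using fun i => exists_isFractionalBlockPacking_sum_eq_fbsAt g (curry x i)
  have hlift : ∀ i ∈ s,
      IsFractionalBlockPacking f x (pushforward (fun A : Finset J => {i} ×ˢ A) (w i)) :=
    fun i hi => (hw i).pushforward _ Prod.snd
      (fun A hA => h i hi A (by_contra fun hnb => hA ((hw i).eq_zero_of_not_isBlock A hnb)))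
      fun A p hp => (mem_product.1 hp).2
  calc ∑ i ∈ s, fbsAt g (curry x i)
      = ∑ C, ∑ i ∈ s, pushforward (fun A : Finset J => {i} ×ˢ A) (w i) C := by
        rw [sum_comm]
        simp [sum_pushforward, hsum]
    _ ≤ fbsAt f x := (isFractionalBlockPacking_sum_pushforward_singleton_product hlift).sum_le_fbsAt

end RowDecomposition

section OrComposition

variable {n : ℕ} {J : Type*} [Fintype J] [DecidableEq J] {g : (J → Bool) → Bool}
  {x : Fin n × J → Bool}

theorem comp_or_eq_true : comp (ORn n) g x = true ↔ ∃ i, g (curry x i) = true :=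
  decide_eq_true_iff

theorem comp_or_eq_false : comp (ORn n) g x = false ↔ ∀ i, g (curry x i) = false := by
  rw [← Bool.not_eq_true, comp_or_eq_true]
  simp

theorem comp_or_eq_of_forall_ne {i : Fin n} (h : ∀ i' ≠ i, g (curry x i') = false) :
    comp (ORn n) g x = g (curry x i) := by
  cases hi : g (curry x i)
  · refine comp_or_eq_false.2 fun i' => ?_
    rcases eq_or_ne i' i with rfl | hi'
    exacts [hi, h i' hi']
  · exact comp_or_eq_true.2 ⟨i, hi⟩

theorem rowsDetectBlocks_comp {ι : Type*} [Fintype ι] [DecidableEq ι] (f : (ι → Bool) → Bool)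
    (g : (J → Bool) → Bool) (x : ι × J → Bool) : RowsDetectBlocks (comp f g) g x univ := by
  intro B hB
  by_contra! hrows
  refine hB (congrArg f (funext fun i => ?_))
  have hi := hrows i (mem_univ i)
  rw [IsBlock, not_not, ← curry_flipSet] at hi
  exact hi

theorem rowsDetectBlocks_comp_or_of_true {i : Fin n} (hi : g (curry x i) = true) :
    RowsDetectBlocks (comp (ORn n) g) g x {i} := by
  intro B hB
  have hflip : comp (ORn n) g (flipSet x B) = false := by
    rw [IsBlock, comp_or_eq_true.2 ⟨i, hi⟩] at hB
    simpa using hB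
  have hrow := comp_or_eq_false.1 hflip i
  rw [curry_flipSet] at hrow
  exact ⟨i, mem_singleton_self i, by simp [IsBlock, hrow, hi]⟩

theorem rowBlocksLift_comp_or {s : Finset (Fin n)}
    (h : ∀ i ∈ s, ∀ i' ≠ i, g (curry x i') = false) :
    RowBlocksLift (comp (ORn n) g) g x s := by
  intro i hi A hA
  have hflip : comp (ORn n) g (flipSet x ({i} ×ˢ A)) = g (flipSet (curry x i) A) := by
    rw [comp_or_eq_of_forall_ne (i := i), curry_flipSet, row_singleton_product]
    intro i' hi'
    rw [curry_flipSet, row_singleton_product_of_ne hi', flipSet_empty]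
    exact h i hi i' hi'
  rw [IsBlock, hflip, comp_or_eq_of_forall_ne (h i hi)]
  exact hA

variable {α : Type*} [ConditionallyCompleteLinearOrder α] [AddCommMonoid α]
  (μF : (Fin n × J → Bool) → α) (μg : (J → Bool) → α)

theorem sSup_comp_or_true (hn : 0 < n) (hgf : ∃ y, g y = false) (hgt : ∃ y, g y = true)
    (hdown : ∀ x s, RowsDetectBlocks (comp (ORn n) g) g x s → μF x ≤ ∑ i ∈ s, μg (curry x i))
    (hup : ∀ x s, RowBlocksLift (comp (ORn n) g) g x s → ∑ i ∈ s, μg (curry x i) ≤ μF x) :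
    sSup {a | ∃ x, comp (ORn n) g x = true ∧ a = μF x} =
      sSup {a | ∃ y, g y = true ∧ a = μg y} := by
  obtain ⟨z, hz⟩ := hgf
  let i₀ : Fin n := ⟨0, hn⟩
  have hembed : ∀ y, g y = true → ∃ x, comp (ORn n) g x = true ∧ μg y ≤ μF x := by
    intro y hy
    let x := uncurry (update (fun _ => z) i₀ y)
    have hrow : curry x i₀ = y := by simp [x]
    have hothers : ∀ i ≠ i₀, g (curry x i) = false := fun i hi => by simp [x, hi, hz]
    refine ⟨x, comp_or_eq_true.2 ⟨i₀, hrow ▸ hy⟩, ?_⟩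
    simpa [hrow] using hup x {i₀} (rowBlocksLift_comp_or (by simpa using hothers))
  obtain ⟨y, hy⟩ := hgt
  obtain ⟨x₀, hx₀, -⟩ := hembed y hy
  refine le_antisymm (sSup_setOf_le_sSup_setOf ⟨x₀, hx₀⟩ fun x hx => ?_)
    (sSup_setOf_le_sSup_setOf ⟨y, hy⟩ hembed)
  obtain ⟨i, hi⟩ := comp_or_eq_true.1 hx
  exact ⟨curry x i, hi, by simpa using hdown x {i} (rowsDetectBlocks_comp_or_of_true hi)⟩

theorem sSup_comp_or_false [IsOrderedAddMonoid α] (hgf : ∃ y, g y = false)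
    (hdown : ∀ x s, RowsDetectBlocks (comp (ORn n) g) g x s → μF x ≤ ∑ i ∈ s, μg (curry x i))
    (hup : ∀ x s, RowBlocksLift (comp (ORn n) g) g x s → ∑ i ∈ s, μg (curry x i) ≤ μF x) :
    sSup {a | ∃ x, comp (ORn n) g x = false ∧ a = μF x} =
      n • sSup {a | ∃ y, g y = false ∧ a = μg y} := by
  have hsum : ∀ x, comp (ORn n) g x = false → μF x = ∑ i, μg (curry x i) := fun x hx =>
    le_antisymm (hdown x univ (rowsDetectBlocks_comp _ g x))
      (hup x univ (rowBlocksLift_comp_or fun _ _ i _ => comp_or_eq_false.1 hx i))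
  have hconst : ∀ y, g y = false → comp (ORn n) g (uncurry fun _ => y) = false :=
    fun y hy => comp_or_eq_false.2 fun _ => hy
  refine le_antisymm ?_ ?_
  · obtain ⟨y, hy⟩ := hgf
    obtain ⟨x, hx, hsup⟩ :=
      exists_sSup_setOf_eq (p := (comp (ORn n) g · = false)) μF ⟨_, hconst y hy⟩
    rw [hsup, hsum x hx]
    calc ∑ i, μg (curry x i) ≤ ∑ _i : Fin n, sSup {a | ∃ y, g y = false ∧ a = μg y} :=
          sum_le_sum fun i _ => le_sSup_setOf (comp_or_eq_false.1 hx i)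
      _ = n • sSup {a | ∃ y, g y = false ∧ a = μg y} := by simp
  · obtain ⟨y, hy, hsup⟩ := exists_sSup_setOf_eq μg hgf
    calc n • sSup {a | ∃ y, g y = false ∧ a = μg y} = μF (uncurry fun _ => y) := by
          simp [hsup, hsum _ (hconst y hy)]
      _ ≤ _ := le_sSup_setOf (hconst y hy)

end OrComposition

end BS

open BS in
/-- Let `g` be a non-constant boolean function on `m` variables and
`f := OR_n ∘ g`.  Then `C_1(f) = C_1(g)`, `bs_1(f) = bs_1(g)`, `bs*_1(f) = bs*_1(g)`,
`C_0(f) = n·C_0(g)`, `bs_0(f) = n·bs_0(g)` and `bs*_0(f) = n·bs*_0(g)`. -/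
theorem or_comp_measures {n m : ℕ} (hn : 0 < n) (g : (Fin m → Bool) → Bool)
    (hgf : ∃ x, g x = false) (hgt : ∃ x, g x = true) :
    Cb (comp (ORn n) g) true = Cb g true ∧
    bsb (comp (ORn n) g) true = bsb g true ∧
    fbsb (comp (ORn n) g) true = fbsb g true ∧
    Cb (comp (ORn n) g) false = n * Cb g false ∧
    bsb (comp (ORn n) g) false = n * bsb g false ∧
    fbsb (comp (ORn n) g) false = n * fbsb g false := by
  refine ⟨sSup_comp_or_true _ _ hn hgf hgt (fun _ _ => CAt_le_sum_of_rowsDetectBlocks)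
      (fun _ _ => sum_CAt_le_of_rowBlocksLift),
    sSup_comp_or_true _ _ hn hgf hgt (fun _ _ => bsAt_le_sum_of_rowsDetectBlocks)
      (fun _ _ => sum_bsAt_le_of_rowBlocksLift),
    sSup_comp_or_true _ _ hn hgf hgt (fun _ _ => fbsAt_le_sum_of_rowsDetectBlocks)
      (fun _ _ => sum_fbsAt_le_of_rowBlocksLift), ?_, ?_, ?_⟩
  · exact sSup_comp_or_false _ _ hgf (fun _ _ => CAt_le_sum_of_rowsDetectBlocks)
      (fun _ _ => sum_CAt_le_of_rowBlocksLift)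
  · exact sSup_comp_or_false _ _ hgf (fun _ _ => bsAt_le_sum_of_rowsDetectBlocks)
      (fun _ _ => sum_bsAt_le_of_rowBlocksLift)
  · rw [← nsmul_eq_mul]
    exact sSup_comp_or_false _ _ hgf (fun _ _ => fbsAt_le_sum_of_rowsDetectBlocks)
      (fun _ _ => sum_fbsAt_le_of_rowBlocksLift)
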